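/- Let L be the Laplacian matrix of a weighted graph on n ≥ 2 vertices with nonnegative edge weights, i.e., L = diag(S·1) - S where S is a symmetric nonnegative matrix with zero diagonal. Then the second-smallest eigenvalue λ₂ of L (the Fiedler value) satisfies λ₂ ≤ (n/(n-1)) · min_{1 ≤ i ≤ n} L_{ii}. -/
import Mathlib

open Matrix

private lemma _dummy : True := trivial

open Matrix in
private lemma fiedler_exists_eigenbasis {n : ℕ} (L : Matrix (Fin n) (Fin n) ℝ)
    (hLh : L.IsHermitian) :
    ∃ w : Fin n → (Fin n → ℝ),
      (∀ k, L *ᵥ w k = hLh.eigenvalues k • w k) ∧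
      (∀ k l, ∑ i, w k i * w l i = if k = l then 1 else 0) ∧
      (∀ i j, ∑ k, w k i * w k j = if i = j then 1 else 0) := by
  refine ⟨fun k => ⇑(hLh.eigenvectorBasis k), fun k => hLh.mulVec_eigenvectorBasis k, ?_, ?_⟩
  · intro k l
    have := hLh.eigenvectorBasis.orthonormal
    rw [orthonormal_iff_ite] at this
    simpa [PiLp.inner_apply, RCLike.inner_apply, mul_comm] using this k l
  · intro i j
    have hm := (Matrix.mem_unitaryGroup_iff).mp hLh.eigenvectorUnitary.2
    simpa [Matrix.mul_apply, Matrix.one_apply, Matrix.star_apply] using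
      congrFun (congrFun hm i) j

/-- Fiedler value upper bound: for the Laplacian `L = diag(S·1) - S` of a weighted graph
on `n ≥ 2` vertices with nonnegative weights, the second-smallest eigenvalue `λ₂`
satisfies `λ₂ ≤ (n/(n-1)) · min_i L_{ii}`. -/
theorem fiedler_value_le_min_degree {n : ℕ} (hn : 2 ≤ n)
    (S : Matrix (Fin n) (Fin n) ℝ) (hsymm : S.IsSymm)
    (hnonneg : ∀ i j, 0 ≤ S i j) (hdiag : ∀ i, S i i = 0)
    (L : Matrix (Fin n) (Fin n) ℝ)
    (hL : L = Matrix.diagonal (fun i => ∑ j, S i j) - S)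
    (hLh : L.IsHermitian)
    (lam : Fin n → ℝ) (hmono : Monotone lam)
    (hperm : ∃ e : Equiv.Perm (Fin n), lam = hLh.eigenvalues ∘ e) :
    lam ⟨1, by omega⟩ ≤ ((n : ℝ) / (n - 1)) *
      (Finset.univ.inf' (by simp [Finset.univ_nonempty_iff]; exact Fin.pos_iff_nonempty.mp (by omega)) (fun i => L i i)) := by
  obtain ⟨e, he⟩ := hperm
  have hn2 : (2:ℝ) ≤ (n:ℝ) := by exact_mod_cast hn
  have hn1 : (0:ℝ) < (n:ℝ) - 1 := by linarith
  have hnpos : (0:ℝ) < (n:ℝ) := by linarith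
  obtain ⟨i0, -, hi0⟩ := Finset.exists_mem_eq_inf'
    (show (Finset.univ : Finset (Fin n)).Nonempty by
      simp [Finset.univ_nonempty_iff]; exact Fin.pos_iff_nonempty.mp (by omega))
    (fun i => L i i)
  rw [hi0]
  set ι1 : Fin n := ⟨1, by omega⟩ with hι1
  have hS : ∀ i j, S i j = S j i := fun i j => congrFun (congrFun hsymm j) i
  have hdeg : ∀ i, L i i = ∑ j, S i j := by
    intro i
    simp [hL, Matrix.sub_apply, Matrix.diagonal_apply_eq, hdiag i]
  have hsymL : ∀ i j, L i j = L j i := by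
    intro i j
    by_cases h : i = j
    · rw [h]
    · simp [hL, Matrix.sub_apply, Matrix.diagonal_apply_ne _ h,
        Matrix.diagonal_apply_ne _ (Ne.symm h), hS i j]
  have hrow : ∀ i, ∑ j, L i j = 0 := by
    intro i
    simp only [hL, Matrix.sub_apply, Finset.sum_sub_distrib]
    rw [Finset.sum_eq_single i (fun j _ hj => Matrix.diagonal_apply_ne _ (Ne.symm hj))
      (by simp)]
    simp
  have hcol : ∀ j, ∑ i, L i j = 0 := by
    intro j
    rw [show (∑ i, L i j) = ∑ i, L j i from Finset.sum_congr rfl fun i _ => hsymL i j]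
    exact hrow j
  have hL1 : L *ᵥ (fun _ => (1:ℝ)) = 0 := by
    funext i
    simp only [Matrix.mulVec, dotProduct, mul_one, Pi.zero_apply]
    exact hrow i
  obtain ⟨w, hw1, hw2, hw3⟩ := fiedler_exists_eigenbasis L hLh
  set lam' := hLh.eigenvalues with hlam'
  have hlamval : ∀ k, lam (e.symm k) = lam' k := by
    intro k
    rw [he]; simp
  have hLnn : 0 ≤ L i0 i0 := by
    rw [hdeg]; exact Finset.sum_nonneg fun j _ => hnonneg i0 j
  rcases le_or_gt (lam ι1) 0 with h0 | hpos
  · exact le_trans h0 (mul_nonneg (div_nonneg hnpos.le hn1.le) hLnn)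
  -- main case
  have hswap : ∀ u v : Fin n → ℝ, (L *ᵥ u) ⬝ᵥ v = u ⬝ᵥ (L *ᵥ v) := by
    intro u v
    simp only [dotProduct, Matrix.mulVec, Finset.sum_mul, Finset.mul_sum]
    rw [Finset.sum_comm]
    exact Finset.sum_congr rfl fun i _ => Finset.sum_congr rfl fun j _ => by
      rw [hsymL j i]; ring
  have hcomp : ∀ (y : Fin n → ℝ) i, ∑ k, (w k ⬝ᵥ y) * w k i = y i := by
    intro y i
    simp only [dotProduct, Finset.sum_mul]
    rw [Finset.sum_comm]
    have : ∀ j, ∑ k, w k j * y j * w k i = y j * ∑ k, w k i * w k j := by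
      intro j
      rw [Finset.mul_sum]
      exact Finset.sum_congr rfl fun k _ => by ring
    rw [Finset.sum_congr rfl fun j _ => this j]
    simp [hw3]
  set x : Fin n → ℝ := fun j => (if j = i0 then (n:ℝ) else 0) - 1 with hxdef
  set c : Fin n → ℝ := fun k => w k ⬝ᵥ x with hcdef
  set b : Fin n → ℝ := fun k => w k ⬝ᵥ (fun _ => 1) with hbdef
  have hbl : ∀ k, lam' k * b k = 0 := by
    intro k
    have h1 : (L *ᵥ w k) ⬝ᵥ (fun _ => (1:ℝ)) = lam' k * b k := by
      rw [hw1 k, smul_dotProduct]; rfl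
    rw [← h1, hswap, hL1]
    simp
  have hb0 : ∃ k, b k ≠ 0 := by
    by_contra h
    push_neg at h
    obtain ⟨z⟩ : Nonempty (Fin n) := ⟨⟨0, by omega⟩⟩
    have h1 := hcomp (fun _ => 1) z
    have h2 : ∀ k, (w k ⬝ᵥ fun _ => (1:ℝ)) * w k z = 0 := fun k => by
      rw [show (w k ⬝ᵥ fun _ => (1:ℝ)) = b k from rfl, h k, zero_mul]
    rw [Finset.sum_congr rfl fun k _ => h2 k] at h1
    simp at h1
  obtain ⟨k₀, hk₀⟩ := hb0
  have hlamk₀ : lam' k₀ = 0 := by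
    rcases mul_eq_zero.mp (hbl k₀) with h | h
    · exact h
    · exact absurd h hk₀
  have hek₀ : ((e.symm k₀ : Fin n) : ℕ) = 0 := by
    have h1 : lam (e.symm k₀) < lam ι1 := by rw [hlamval, hlamk₀]; exact hpos
    have h2 : (e.symm k₀ : Fin n) < ι1 := by
      by_contra hc
      push_neg at hc
      exact absurd (hmono hc) (not_le.mpr h1)
    have hv := Fin.lt_iff_val_lt_val.mp h2
    have hv1 : (ι1 : ℕ) = 1 := rfl
    omega
  have hge : ∀ k, k ≠ k₀ → lam ι1 ≤ lam' k := by
    intro k hk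
    by_contra hlt
    push_neg at hlt
    have h1 : lam (e.symm k) < lam ι1 := by rw [hlamval]; exact hlt
    have h2 : (e.symm k : Fin n) < ι1 := by
      by_contra hc
      push_neg at hc
      exact absurd (hmono hc) (not_le.mpr h1)
    have h3 : ((e.symm k : Fin n) : ℕ) = 0 := by
      have hv := Fin.lt_iff_val_lt_val.mp h2
      have hv1 : (ι1 : ℕ) = 1 := rfl
      omega
    have h4 : e.symm k = e.symm k₀ := Fin.ext (by rw [h3, hek₀])
    exact hk (e.symm.injective h4)
  have hbz : ∀ k, k ≠ k₀ → b k = 0 := by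
    intro k hk
    rcases mul_eq_zero.mp (hbl k) with h | h
    · exact absurd h (ne_of_gt (lt_of_lt_of_le hpos (hge k hk)))
    · exact h
  have hxsum : ∑ j, x j = 0 := by
    simp only [hxdef, Finset.sum_sub_distrib, Finset.sum_ite_eq', Finset.mem_univ,
      if_true, Finset.sum_const, Finset.card_univ, Fintype.card_fin, nsmul_eq_mul, mul_one]
    ring
  have hck₀ : c k₀ = 0 := by
    have hsum : ∑ k, b k * c k = ∑ i, x i := by
      have h1 : ∀ k, b k * c k = ∑ i, c k * w k i := by
        intro k
        rw [hbdef]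
        simp only [dotProduct, mul_one, Finset.sum_mul, Finset.mul_sum]
        exact Finset.sum_congr rfl fun i _ => by ring
      rw [Finset.sum_congr rfl fun k _ => h1 k, Finset.sum_comm]
      exact Finset.sum_congr rfl fun i _ => hcomp x i
    rw [hxsum, Finset.sum_eq_single k₀ (fun k _ hk => by rw [hbz k hk, zero_mul])
      (by simp)] at hsum
    rcases mul_eq_zero.mp hsum with h | h
    · exact absurd h hk₀
    · exact h
  have hnormx : x ⬝ᵥ x = ∑ k, (c k)^2 := by
    have h1 : ∀ i, x i * x i = (∑ k, c k * w k i) * x i := by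
      intro i; rw [hcomp x i]
    calc x ⬝ᵥ x = ∑ i, x i * x i := rfl
      _ = ∑ i, ∑ k, c k * w k i * x i := by
          exact Finset.sum_congr rfl fun i _ => by rw [h1 i, Finset.sum_mul]
      _ = ∑ k, ∑ i, c k * (w k i * x i) := by
          rw [Finset.sum_comm]; exact Finset.sum_congr rfl fun k _ =>
            Finset.sum_congr rfl fun i _ => by ring
      _ = ∑ k, (c k)^2 := by
          refine Finset.sum_congr rfl fun k _ => ?_
          rw [← Finset.mul_sum]
          rw [show (∑ i, w k i * x i) = c k from rfl]
          ring
  have hLx : x ⬝ᵥ (L *ᵥ x) = ∑ k, lam' k * (c k)^2 := by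
    have h1 : ∀ i, x i * (L *ᵥ x) i = (∑ k, c k * w k i) * (L *ᵥ x) i := by
      intro i; rw [hcomp x i]
    calc x ⬝ᵥ (L *ᵥ x) = ∑ i, x i * (L *ᵥ x) i := rfl
      _ = ∑ i, ∑ k, c k * w k i * (L *ᵥ x) i := by
          exact Finset.sum_congr rfl fun i _ => by rw [h1 i, Finset.sum_mul]
      _ = ∑ k, c k * (w k ⬝ᵥ (L *ᵥ x)) := by
          rw [Finset.sum_comm]
          refine Finset.sum_congr rfl fun k _ => ?_
          rw [dotProduct, Finset.mul_sum]
          exact Finset.sum_congr rfl fun i _ => by ring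
      _ = ∑ k, lam' k * (c k)^2 := by
          refine Finset.sum_congr rfl fun k _ => ?_
          rw [← hswap, hw1 k, smul_dotProduct]
          rw [show (w k ⬝ᵥ x) = c k from rfl, smul_eq_mul]
          ring
  have hineq : lam ι1 * (x ⬝ᵥ x) ≤ x ⬝ᵥ (L *ᵥ x) := by
    rw [hnormx, hLx, Finset.mul_sum]
    refine Finset.sum_le_sum fun k _ => ?_
    by_cases hk : k = k₀
    · subst hk; rw [hck₀]; simp
    · exact mul_le_mul_of_nonneg_right (hge k hk) (sq_nonneg _)
  have hxx : x ⬝ᵥ x = (n:ℝ)^2 - n := by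
    have h1 : ∀ j, x j * x j = (if j = i0 then ((n:ℝ)^2 - 2*n) else 0) + 1 := by
      intro j
      by_cases h : j = i0 <;> simp [hxdef, h] <;> ring
    calc x ⬝ᵥ x = ∑ j, x j * x j := rfl
      _ = ∑ j, ((if j = i0 then ((n:ℝ)^2 - 2*n) else 0) + 1) :=
          Finset.sum_congr rfl fun j _ => h1 j
      _ = (n:ℝ)^2 - n := by
          simp [Finset.sum_add_distrib, Finset.sum_ite_eq', Finset.card_univ]
          ring
  have hLxx : x ⬝ᵥ (L *ᵥ x) = (n:ℝ)^2 * L i0 i0 := by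
    have hmv : L *ᵥ x = fun j => (n:ℝ) * L j i0 := by
      funext j
      simp only [Matrix.mulVec, dotProduct, hxdef, mul_sub, mul_one,
        Finset.sum_sub_distrib, mul_ite, mul_zero, Finset.sum_ite_eq',
        Finset.mem_univ, if_true]
      rw [hrow j]
      ring
    rw [hmv]
    calc (∑ j, x j * ((n:ℝ) * L j i0))
        = (n:ℝ) * ∑ j, ((if j = i0 then (n:ℝ) else 0) * L j i0 - L j i0) := by
          rw [Finset.mul_sum]
          exact Finset.sum_congr rfl fun j _ => by rw [hxdef]; ring
      _ = (n:ℝ)^2 * L i0 i0 := by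
          rw [Finset.sum_sub_distrib, hcol i0]
          simp [Finset.sum_ite_eq', ite_mul]
          ring
  rw [div_mul_eq_mul_div, le_div_iff₀ hn1]
  nlinarith [hineq, hxx, hLxx, hpos]
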